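/- For any forecasting system φ and any countable set 𝒮 of selection processes, there is at least one path ω ∈ Ω that is 𝒮-random for φ. -/

import Mathlib

open Filter Classical

/-- Situations: finite binary strings. -/
abbrev Situation := List Bool

/-- Paths: infinite binary sequences. -/
abbrev BinPath := ℕ → Bool

/-- The length-`n` prefix `ω_{1:n}` of a path. -/
def pref (ω : BinPath) (n : ℕ) : Situation := List.ofFn (fun i : Fin n => ω i)

/-- The real value of a bit. -/
def bit (x : Bool) : ℝ := if x then 1 else 0

/-- Local expectation `E_p(f) = p f(1) + (1-p) f(0)` of a gamble `f : Bool → ℝ`. -/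
def localE (p : ℝ) (f : Bool → ℝ) : ℝ := p * f true + (1 - p) * f false

/-- Upper expectation of a gamble for interval forecast `[lo, hi]`. -/
def upperE (lo hi : ℝ) (f : Bool → ℝ) : ℝ := max (localE lo f) (localE hi f)

/-- A forecasting system, given by lower and upper bounds `lo hi : Situation → ℝ`,
is proper when `0 ≤ lo s ≤ hi s ≤ 1` everywhere. -/
def IsForecastingSystem (lo hi : Situation → ℝ) : Prop :=
  ∀ s, 0 ≤ lo s ∧ lo s ≤ hi s ∧ hi s ≤ 1

/-- The process difference `ΔF(s) : x ↦ F(s·x) − F(s)`. -/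
def diffP (F : Situation → ℝ) (s : Situation) : Bool → ℝ := fun x => F (s ++ [x]) - F s

/-- A supermartingale for the forecasting system `(lo, hi)`. -/
def IsSupermartingale (lo hi : Situation → ℝ) (F : Situation → ℝ) : Prop :=
  ∀ s, upperE (lo s) (hi s) (diffP F s) ≤ 0

/-- A test supermartingale: a nonnegative supermartingale starting at 1. -/
def IsTestSupermartingale (lo hi : Situation → ℝ) (F : Situation → ℝ) : Prop :=
  IsSupermartingale lo hi F ∧ (∀ s, 0 ≤ F s) ∧ F [] = 1

/-- A real process is (positive) rational-valued and recursive. -/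
def IsRecursiveRational (F : Situation → ℝ) : Prop :=
  ∃ q : Situation → ℚ, Computable q ∧ ∀ s, (q s : ℝ) = F s

/-- A real process is computable. -/
def IsComputableProcess (F : Situation → ℝ) : Prop :=
  ∃ q : Situation → ℕ → ℚ, Computable₂ q ∧
    ∀ s n, |F s - q s n| < (2 : ℝ) ^ (-(n : ℤ))

/-- A real process is lower semicomputable. -/
def IsLSCProcess (F : Situation → ℝ) : Prop :=
  ∃ q : Situation → ℕ → ℚ, Computable₂ q ∧
    (∀ s n, q s n ≤ q s (n + 1)) ∧
    ∀ s, Tendsto (fun m => (q s m : ℝ)) atTop (nhds (F s))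

/-- A (real) growth function: computable, nonnegative, nondecreasing and unbounded. -/
def IsGrowthFunction (τ : ℕ → ℝ) : Prop :=
  (∀ n, 0 ≤ τ n) ∧ (∀ n, τ n ≤ τ (n + 1)) ∧ Tendsto τ atTop atTop ∧
    ∃ q : ℕ → ℕ → ℚ, Computable₂ q ∧ ∀ n m, |τ n - q n m| < (2 : ℝ) ^ (-(m : ℤ))

/-- A real process is unbounded on a path: `limsup_n T(ω_{1:n}) = ∞`. -/
def UnboundedOn (T : Situation → ℝ) (ω : BinPath) : Prop :=
  limsup (fun n => ((T (pref ω n) : ℝ) : EReal)) atTop = ⊤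

/-- A real process is computably unbounded on a path:
`limsup_n [T(ω_{1:n}) − τ(n)] ≥ 0` for some growth function `τ`. -/
def ComputablyUnboundedOn (T : Situation → ℝ) (ω : BinPath) : Prop :=
  ∃ τ : ℕ → ℝ, IsGrowthFunction τ ∧
    0 ≤ limsup (fun n => ((T (pref ω n) - τ n : ℝ) : EReal)) atTop

/-- Computable randomness for the forecasting system `(lo, hi)`:
no recursive positive rational test supermartingale is unbounded on `ω`. -/
def CRandom (lo hi : Situation → ℝ) (ω : BinPath) : Prop :=
  ∀ T : Situation → ℝ, IsRecursiveRational T → (∀ s, 0 < T s) →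
    IsTestSupermartingale lo hi T → ¬ UnboundedOn T ω

/-- Schnorr randomness for the forecasting system `(lo, hi)`:
no recursive positive rational test supermartingale is computably unbounded on `ω`. -/
def SchnorrRandom (lo hi : Situation → ℝ) (ω : BinPath) : Prop :=
  ∀ T : Situation → ℝ, IsRecursiveRational T → (∀ s, 0 < T s) →
    IsTestSupermartingale lo hi T → ¬ ComputablyUnboundedOn T ω

/-- Martin-Löf randomness for the forecasting system `(lo, hi)`:
no lower semicomputable test supermartingale is unbounded on `ω`. -/
def MLRandom (lo hi : Situation → ℝ) (ω : BinPath) : Prop :=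
  ∀ T : Situation → ℝ, IsLSCProcess T →
    IsTestSupermartingale lo hi T → ¬ UnboundedOn T ω

/-- A selection process is temporal if its value depends only on the length. -/
def IsTemporal (S : Situation → Bool) : Prop :=
  ∀ s t : Situation, s.length = t.length → S s = S t

/-- Value of a selection process along a path. -/
def selVal (S : Situation → Bool) (ω : BinPath) (k : ℕ) : ℝ := if S (pref ω k) then 1 else 0

/-- `ω` is `𝒮`-random for the forecasting system `(lo, hi)`. -/
def SSetRandom (𝒮 : Set (Situation → Bool)) (lo hi : Situation → ℝ) (ω : BinPath) : Prop :=
  ∀ S ∈ 𝒮,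
    Tendsto (fun n => ∑ k ∈ Finset.range n, selVal S ω k) atTop atTop →
      0 ≤ liminf (fun n =>
          (((∑ k ∈ Finset.range n, selVal S ω k * (bit (ω k) - lo (pref ω k))) /
              (∑ k ∈ Finset.range n, selVal S ω k) : ℝ) : EReal)) atTop ∧
        limsup (fun n =>
          (((∑ k ∈ Finset.range n, selVal S ω k * (bit (ω k) - hi (pref ω k))) /
              (∑ k ∈ Finset.range n, selVal S ω k) : ℝ) : EReal)) atTop ≤ 0

/-- Weak Church randomness: the selection-process conditions hold for all
recursive temporal selection processes. -/
def WCHRandom (lo hi : Situation → ℝ) (ω : BinPath) : Prop :=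
  SSetRandom {S | Computable S ∧ IsTemporal S} lo hi ω

/-- Global upper expectation of a bounded global gamble `f : BinPath → ℝ`. -/
noncomputable def globalUpperE (lo hi : Situation → ℝ) (f : BinPath → ℝ) : ℝ :=
  sInf {m : ℝ | ∃ M : Situation → ℝ, IsSupermartingale lo hi M ∧ M [] = m ∧
    ∀ ω : BinPath, (f ω : EReal) ≤ liminf (fun n => ((M (pref ω n) : ℝ) : EReal)) atTop}

/-- Upper probability of an event. -/
noncomputable def upperProb (lo hi : Situation → ℝ) (A : Set BinPath) : ℝ :=
  globalUpperE lo hi (Set.indicator A 1)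

/-- An event is almost sure if its complement has upper probability zero. -/
def AlmostSure (lo hi : Situation → ℝ) (A : Set BinPath) : Prop :=
  upperProb lo hi Aᶜ = 0

/-- The set of recursive positive rational test processes `𝓕_C`. -/
def FsetC : Set (Situation → ℝ) :=
  {F | IsRecursiveRational F ∧ (∀ s, 0 < F s) ∧ F [] = 1}

/-- The set of lower semicomputable test processes `𝓕_ML`. -/
def FsetML : Set (Situation → ℝ) :=
  {F | IsLSCProcess F ∧ (∀ s, 0 ≤ F s) ∧ F [] = 1}

/-- The temporal selection process `S^r_F` associated with a real process `F`
and a number `r`. -/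
noncomputable def selProc (r : ℝ) (F : Situation → ℝ) : Situation → Bool := fun s =>
  if ∃ t : Situation, t.length = s.length ∧ 0 < localE r (diffP F t) then true else false

/-- The set of selection processes `𝒮^{p,q}_𝓕`. -/
def SelSet (p q : ℝ) (𝓕 : Set (Situation → ℝ)) : Set (Situation → Bool) :=
  {S | ∃ F ∈ 𝓕, ∃ r ∈ ({p, q} : Set ℝ), S = selProc r F}

/-- The temporal precise forecasting system `φ^ϖ_{p,q}`. -/
def tempFS (p q : ℝ) (ϖ : BinPath) : Situation → ℝ := fun s => if ϖ s.length then q else p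

/-- A test process `F` is generated by the multiplier process `D`. -/
def GeneratedBy (D : Situation → Bool → ℝ) (F : Situation → ℝ) : Prop :=
  F [] = 1 ∧ ∀ s x, F (s ++ [x]) = F s * D s x

/-- A lower semicomputable multiplier process: a nonnegative gamble process that
is lower semicomputable. -/
def IsLSCMultiplier (D : Situation → Bool → ℝ) : Prop :=
  (∀ s x, 0 ≤ D s x) ∧
  ∃ q : Situation → Bool → ℕ → ℚ,
    Computable (fun p : Situation × Bool × ℕ => q p.1 p.2.1 p.2.2) ∧
    (∀ s x n, q s x n ≤ q s x (n + 1)) ∧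
    ∀ s x, Tendsto (fun m => (q s x m : ℝ)) atTop (nhds (D s x))

/-!
Ville's construction. For a selection process `S`, a rate `ε` and a gamble `c` bounded by 1
whose upper expectation is nonpositive (`bit x - φ̄` or `φ̲ - bit x`), betting the fraction `ε` of
the capital on `c` whenever `S` selects gives a test supermartingale. A countable mixture of
these, over `S ∈ 𝒮`, `ε = 1/(m+2)` and both gambles, is again a supermartingale, and some path
never lets it increase; along that path each component stays bounded. Since
`log (1 + u) ≥ u - 2u²`, a bounded product of the `1 + ε S c` bounds the selected sum of `c` by
`log C / ε + 2ε` times the number of selections, so the selected average of `c` is eventually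
at most `3ε`; letting `ε → 0` gives both limit conditions.
-/

lemma pref_succ (ω : BinPath) (n : ℕ) : pref ω (n + 1) = pref ω n ++ [ω n] := by
  rw [pref, List.ofFn_succ']
  simp [List.concat_eq_append, pref]

lemma localE_diffP (p : ℝ) (F : Situation → ℝ) (s : Situation) :
    localE p (diffP F s) = p * F (s ++ [true]) + (1 - p) * F (s ++ [false]) - F s := by
  simp only [localE, diffP]
  ring

lemma upperE_const_mul {a : ℝ} (ha : 0 ≤ a) (p q : ℝ) (f : Bool → ℝ) :
    upperE p q (fun x => a * f x) = a * upperE p q f := by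
  have h : ∀ r, localE r (fun x => a * f x) = a * localE r f := fun r => by
    simp only [localE]
    ring
  rw [upperE, h, h, ← mul_max_of_nonneg _ _ ha, upperE]

lemma exists_append_le_of_isSupermartingale {lo hi F : Situation → ℝ}
    (hF : IsSupermartingale lo hi F) {s : Situation} (hs : lo s ∈ Set.Icc (0 : ℝ) 1) :
    ∃ x, F (s ++ [x]) ≤ F s := by
  have h := (le_max_left _ _).trans (hF s)
  rw [localE_diffP] at h
  by_contra! hlt
  rcases le_total (F (s ++ [true])) (F (s ++ [false])) with hle | hle
  · nlinarith [mul_nonneg (sub_nonneg.2 hs.2) (sub_nonneg.2 hle), hlt true]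
  · nlinarith [mul_nonneg hs.1 (sub_nonneg.2 hle), hlt false]

lemma exists_antitone_along_path {α : Type*} [Preorder α] {F : Situation → α}
    (h : ∀ s, ∃ x, F (s ++ [x]) ≤ F s) : ∃ ω : BinPath, Antitone fun n => F (pref ω n) := by
  choose next hnext using h
  let g : ℕ → Situation := fun n => Nat.rec [] (fun _ s => s ++ [next s]) n
  have hg : ∀ n, pref (fun n => next (g n)) n = g n := by
    intro n
    induction n with
    | zero => simp [pref, g]
    | succ n ih => rw [pref_succ, ih]
  refine ⟨fun n => next (g n), antitone_nat_of_succ_le fun n => ?_⟩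
  simp only [hg]
  exact hnext (g n)

lemma localE_diffP_tsum {ι : Type*} {w : ι → ℝ} {F : ι → Situation → ℝ}
    (hsum : ∀ t, Summable fun j => w j * F j t) (p : ℝ) (s : Situation) :
    localE p (diffP (fun t => ∑' j, w j * F j t) s) = ∑' j, w j * localE p (diffP (F j) s) := by
  simp only [localE_diffP]
  rw [← tsum_mul_left, ← tsum_mul_left, ← ((hsum _).mul_left p).tsum_add
    ((hsum _).mul_left (1 - p)), ← Summable.tsum_sub (((hsum _).mul_left p).add
    ((hsum _).mul_left (1 - p))) (hsum s)]
  congr 1 with j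
  ring

lemma isSupermartingale_tsum {ι : Type*} {lo hi : Situation → ℝ} {w : ι → ℝ}
    {F : ι → Situation → ℝ} (hw : ∀ j, 0 ≤ w j) (hF : ∀ j, IsSupermartingale lo hi (F j))
    (hsum : ∀ t, Summable fun j => w j * F j t) :
    IsSupermartingale lo hi fun t => ∑' j, w j * F j t := fun s => by
  rw [upperE, localE_diffP_tsum hsum, localE_diffP_tsum hsum]
  exact max_le
    (tsum_nonpos fun j => mul_nonpos_of_nonneg_of_nonpos (hw j) ((le_max_left _ _).trans (hF j s)))
    (tsum_nonpos fun j =>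
      mul_nonpos_of_nonneg_of_nonpos (hw j) ((le_max_right _ _).trans (hF j s)))

theorem exists_path_bddAbove_of_isTestSupermartingale {ι : Type*} [Countable ι]
    {lo hi : Situation → ℝ} (hlo : ∀ s, lo s ∈ Set.Icc (0 : ℝ) 1) (F : ι → Situation → ℝ)
    (hF : ∀ j, IsTestSupermartingale lo hi (F j))
    (hbdd : ∀ s, BddAbove (Set.range fun j => F j s)) :
    ∃ ω : BinPath, ∀ j, BddAbove (Set.range fun n => F j (pref ω n)) := by
  obtain ⟨e, he⟩ := Countable.exists_injective_nat ι
  let g : ℕ → ℝ := fun n => 1 / 2 / 2 ^ n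
  have hg : Summable g :=
    (summable_geometric_two.mul_left (1 / 2)).congr fun n => by rw [one_div_pow]; ring
  let w : ι → ℝ := fun j => g (e j)
  have hw_pos : ∀ j, 0 < w j := fun j => by positivity
  have hw_le : ∑' j, w j ≤ 1 :=
    (tsum_comp_le_tsum_of_inj hg (fun n => by positivity) he).trans_eq (tsum_geometric_two' 1)
  have hsum : ∀ s, Summable fun j => w j * F j s := fun s => by
    obtain ⟨M, hM⟩ := hbdd s
    exact Summable.of_nonneg_of_le (fun j => mul_nonneg (hw_pos j).le ((hF j).2.1 s))
      (fun j => mul_le_mul_of_nonneg_left (hM ⟨j, rfl⟩) (hw_pos j).le)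
      ((hg.comp_injective he).mul_right M)
  let T : Situation → ℝ := fun s => ∑' j, w j * F j s
  have hT : IsSupermartingale lo hi T :=
    isSupermartingale_tsum (fun j => (hw_pos j).le) (fun j => (hF j).1) hsum
  obtain ⟨ω, hω⟩ := exists_antitone_along_path fun s =>
    exists_append_le_of_isSupermartingale hT (hlo s)
  refine ⟨ω, fun j => ⟨1 / w j, ?_⟩⟩
  rintro _ ⟨n, rfl⟩
  rw [le_div_iff₀' (hw_pos j)]
  calc w j * F j (pref ω n)
      ≤ T (pref ω n) := (hsum _).le_tsum j fun i _ => mul_nonneg (hw_pos i).le ((hF i).2.1 _)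
    _ ≤ T (pref ω 0) := hω (Nat.zero_le n)
    _ = ∑' j, w j := by simp [T, pref, (hF _).2.2]
    _ ≤ 1 := hw_le

section Betting

noncomputable def prodProcess (D : Situation → Bool → ℝ) (s : Situation) : ℝ :=
  ∏ k ∈ Finset.range s.length, D (s.take k) (s.getD k false)

lemma prodProcess_nil (D : Situation → Bool → ℝ) : prodProcess D [] = 1 := by
  simp [prodProcess]

lemma prodProcess_append (D : Situation → Bool → ℝ) (s : Situation) (x : Bool) :
    prodProcess D (s ++ [x]) = prodProcess D s * D s x := by
  rw [prodProcess, List.length_append, List.length_singleton, Finset.prod_range_succ]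
  congr 1
  · refine Finset.prod_congr rfl fun k hk => ?_
    have hk' : k < s.length := Finset.mem_range.mp hk
    rw [List.take_append_of_le_length hk'.le, List.getD_append _ _ _ _ hk']
  · rw [List.take_left, List.getD_append_right _ _ _ _ le_rfl, Nat.sub_self]
    rfl

lemma prodProcess_pref (D : Situation → Bool → ℝ) (ω : BinPath) (n : ℕ) :
    prodProcess D (pref ω n) = ∏ k ∈ Finset.range n, D (pref ω k) (ω k) := by
  induction n with
  | zero => simp [pref, prodProcess]
  | succ n ih => rw [pref_succ, prodProcess_append, ih, Finset.prod_range_succ]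

lemma prodProcess_mem_Icc {D : Situation → Bool → ℝ} {B : ℝ} (hD : ∀ s x, D s x ∈ Set.Icc 0 B)
    (s : Situation) : prodProcess D s ∈ Set.Icc 0 (B ^ s.length) :=
  ⟨Finset.prod_nonneg fun _ _ => (hD _ _).1, by
    simpa [prodProcess] using Finset.prod_le_prod (s := Finset.range s.length)
      (fun _ _ => (hD _ _).1) (fun _ _ => (hD _ _).2)⟩

/-- Multiplier of a bettor who, whenever `S` selects `s`, stakes the fraction `ε` of the
current capital on the gamble `c s`. -/
def betMultiplier (S : Situation → Bool) (ε : ℝ) (c : Situation → Bool → ℝ)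
    (s : Situation) (x : Bool) : ℝ :=
  1 + ε * ((if S s then 1 else 0) * c s x)

variable {S : Situation → Bool} {ε : ℝ} {c : Situation → Bool → ℝ}

lemma betMultiplier_mem_Icc (hε : ε ∈ Set.Icc (0 : ℝ) 1) (hc : ∀ s x, |c s x| ≤ 1)
    (s : Situation) (x : Bool) : betMultiplier S ε c s x ∈ Set.Icc 0 2 := by
  obtain ⟨hc₁, hc₂⟩ := abs_le.mp (hc s x)
  obtain ⟨hε₀, hε₁⟩ := hε
  unfold betMultiplier
  split_ifs <;> constructor <;> nlinarith

lemma isTestSupermartingale_prodProcess_betMultiplier {lo hi : Situation → ℝ}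
    (hε : ε ∈ Set.Icc (0 : ℝ) 1) (hc : ∀ s x, |c s x| ≤ 1)
    (hup : ∀ s, upperE (lo s) (hi s) (c s) ≤ 0) :
    IsTestSupermartingale lo hi (prodProcess (betMultiplier S ε c)) := by
  have hD := betMultiplier_mem_Icc (S := S) hε hc
  refine ⟨fun s => ?_, fun s => (prodProcess_mem_Icc hD s).1, prodProcess_nil _⟩
  have hdiff : diffP (prodProcess (betMultiplier S ε c)) s =
      fun x => (prodProcess (betMultiplier S ε c) s * ε * (if S s then 1 else 0)) * c s x := by
    funext x
    rw [diffP, prodProcess_append, betMultiplier]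
    ring
  have hstake : 0 ≤ prodProcess (betMultiplier S ε c) s * ε * (if S s then 1 else 0) := by
    have := (prodProcess_mem_Icc hD s).1
    have := hε.1
    split_ifs <;> positivity
  rw [hdiff, upperE_const_mul hstake]
  exact mul_nonpos_of_nonneg_of_nonpos hstake (hup s)

end Betting

def testGamble (lo hi : Situation → ℝ) : Bool → Situation → Bool → ℝ
  | true, s, x => lo s - bit x
  | false, s, x => bit x - hi s

section Gambles

variable {lo hi : Situation → ℝ}

lemma abs_testGamble_le_one (hφ : IsForecastingSystem lo hi) (b : Bool) (s : Situation)
    (x : Bool) : |testGamble lo hi b s x| ≤ 1 := by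
  obtain ⟨h₀, h₁, h₂⟩ := hφ s
  rw [abs_le]
  cases b <;> cases x <;> simp only [testGamble, bit] <;> constructor <;> norm_num <;> linarith

lemma upperE_testGamble_nonpos (hφ : IsForecastingSystem lo hi) (b : Bool) (s : Situation) :
    upperE (lo s) (hi s) (testGamble lo hi b s) ≤ 0 := by
  obtain ⟨-, h₁, -⟩ := hφ s
  cases b <;> simp only [upperE, localE, testGamble, bit] <;> norm_num <;> constructor <;>
    linarith

end Gambles

section Averages

open Finset

lemma exp_sub_two_mul_sq_le_one_add {u : ℝ} (hu : -(1 / 2) ≤ u) :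
    Real.exp (u - 2 * u ^ 2) ≤ 1 + u := by
  set x := u - 2 * u ^ 2
  have hx : 0 < 1 - x := by nlinarith [sq_nonneg u]
  calc Real.exp x ≤ (1 - x)⁻¹ := by
        rw [le_inv_comm₀ (Real.exp_pos _) hx, ← Real.exp_neg]
        linarith [Real.add_one_le_exp (-x)]
    _ ≤ 1 + u := by
        -- `(1 + u) (1 - x) = 1 + u² (1 + 2u)`
        rw [inv_le_iff_one_le_mul₀ hx]
        nlinarith [sq_nonneg u]

lemma sum_sub_two_mul_sq_le_log {u : ℕ → ℝ} (hu : ∀ k, -(1 / 2) ≤ u k) {C : ℝ} {n : ℕ}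
    (h : ∏ k ∈ range n, (1 + u k) ≤ C) : ∑ k ∈ range n, (u k - 2 * u k ^ 2) ≤ Real.log C := by
  have hC : 0 < C := (prod_pos fun k _ => by linarith [hu k]).trans_le h
  rw [Real.le_log_iff_exp_le hC, Real.exp_sum]
  exact (prod_le_prod (fun _ _ => (Real.exp_pos _).le)
    fun k _ => exp_sub_two_mul_sq_le_one_add (hu k)).trans h

variable {σ c : ℕ → ℝ}

lemma eventually_div_sum_le_of_prod_le (hσ : ∀ k, σ k ∈ Set.Icc (0 : ℝ) 1)
    (hc : ∀ k, |c k| ≤ 1) (hdiv : Tendsto (fun n => ∑ k ∈ range n, σ k) atTop atTop)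
    {ε C : ℝ} (hε : 0 < ε) (hε' : ε ≤ 1 / 2)
    (hC : ∀ n, ∏ k ∈ range n, (1 + ε * (σ k * c k)) ≤ C) :
    ∀ᶠ n in atTop, (∑ k ∈ range n, σ k * c k) / ∑ k ∈ range n, σ k ≤ 3 * ε := by
  have hbound : ∀ k, -(1 / 2) ≤ ε * (σ k * c k) ∧ (ε * (σ k * c k)) ^ 2 ≤ ε ^ 2 * σ k := by
    intro k
    obtain ⟨hσ₀, hσ₁⟩ := hσ k
    obtain ⟨hc₁, hc₂⟩ := abs_le.mp (hc k)
    have hσc : |σ k * c k| ≤ 1 := by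
      rw [abs_mul, abs_of_nonneg hσ₀]
      nlinarith [hc k]
    refine ⟨by nlinarith [abs_le.mp hσc], ?_⟩
    rw [mul_pow, mul_pow]
    refine mul_le_mul_of_nonneg_left ?_ (sq_nonneg ε)
    have hc_sq : c k ^ 2 ≤ 1 := by nlinarith
    nlinarith [mul_le_mul_of_nonneg_left hc_sq (sq_nonneg (σ k))]
  have hC1 : 1 ≤ C := by simpa using hC 0
  filter_upwards [hdiv.eventually_ge_atTop (max 1 (Real.log C / ε ^ 2))] with n hn
  have hlog := sum_sub_two_mul_sq_le_log (fun k => (hbound k).1) (hC n)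
  have hsq : ∑ k ∈ range n, (ε * (σ k * c k)) ^ 2 ≤ ε ^ 2 * ∑ k ∈ range n, σ k := by
    rw [mul_sum]
    exact sum_le_sum fun k _ => (hbound k).2
  rw [sum_sub_distrib, ← mul_sum, ← mul_sum] at hlog
  have hlogC : Real.log C ≤ ε ^ 2 * ∑ k ∈ range n, σ k := by
    have := (le_max_right _ _).trans hn
    rwa [div_le_iff₀ (by positivity), mul_comm] at this
  rw [div_le_iff₀ (by linarith [(le_max_left _ _).trans hn])]
  refine le_of_mul_le_mul_left ?_ hε
  nlinarith

lemma limsup_div_sum_nonpos (hσ : ∀ k, σ k ∈ Set.Icc (0 : ℝ) 1) (hc : ∀ k, |c k| ≤ 1)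
    (hdiv : Tendsto (fun n => ∑ k ∈ range n, σ k) atTop atTop)
    (hbdd : ∀ m : ℕ,
      BddAbove (Set.range fun n => ∏ k ∈ range n, (1 + ((m : ℝ) + 2)⁻¹ * (σ k * c k)))) :
    limsup (fun n => (((∑ k ∈ range n, σ k * c k) / ∑ k ∈ range n, σ k : ℝ) : EReal))
      atTop ≤ 0 := by
  have hlim : Tendsto (fun m : ℕ => 3 * ((m : ℝ) + 2)⁻¹) atTop (nhds 0) := by
    simpa using (tendsto_inv_atTop_zero.comp
      (tendsto_atTop_add_const_right _ (2 : ℝ) tendsto_natCast_atTop_atTop)).const_mul (3 : ℝ)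
  refine ge_of_tendsto' (EReal.tendsto_coe.2 hlim) fun m => limsup_le_of_le (h := ?_)
  obtain ⟨C, hC⟩ := hbdd m
  have hε : ((m : ℝ) + 2)⁻¹ ≤ 1 / 2 := by
    rw [one_div]
    exact inv_anti₀ two_pos (by linarith [m.cast_nonneg (α := ℝ)])
  exact (eventually_div_sum_le_of_prod_le hσ hc hdiv (by positivity) hε
    fun n => hC ⟨n, rfl⟩).mono fun n hn => EReal.coe_le_coe_iff.2 hn

lemma limsup_selected_average_nonpos {S : Situation → Bool} {ω : BinPath}
    {c : Situation → Bool → ℝ} (hc : ∀ s x, |c s x| ≤ 1)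
    (hdiv : Tendsto (fun n => ∑ k ∈ range n, selVal S ω k) atTop atTop)
    (hbdd : ∀ m : ℕ, BddAbove (Set.range fun n =>
      prodProcess (betMultiplier S ((m : ℝ) + 2)⁻¹ c) (pref ω n))) :
    limsup (fun n => (((∑ k ∈ range n, selVal S ω k * c (pref ω k) (ω k)) /
      ∑ k ∈ range n, selVal S ω k : ℝ) : EReal)) atTop ≤ 0 := by
  refine limsup_div_sum_nonpos (fun k => ?_) (fun k => hc _ _) hdiv fun m => ?_
  · unfold selVal
    split_ifs <;> norm_num
  · simpa only [prodProcess_pref, betMultiplier, selVal] using hbdd m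

lemma zero_le_liminf_of_limsup_neg_nonpos {g : ℕ → ℝ}
    (h : limsup (fun n => ((-g n : ℝ) : EReal)) atTop ≤ 0) :
    0 ≤ liminf (fun n => (g n : EReal)) atTop := by
  have := EReal.liminf_neg (f := atTop) (v := fun n => ((-g n : ℝ) : EReal))
  simp only [EReal.coe_neg, Pi.neg_def, neg_neg] at this
  rw [this]
  exact EReal.neg_nonneg.2 h

end Averages

/-- for any forecasting system and any countable set of selection
processes there is at least one `𝒮`-random path. -/
theorem statement_11 (lo hi : Situation → ℝ) (hφ : IsForecastingSystem lo hi)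
    (𝒮 : Set (Situation → Bool)) (hc : 𝒮.Countable) :
    ∃ ω : BinPath, SSetRandom 𝒮 lo hi ω := by
  have := hc.to_subtype
  let F : 𝒮 × ℕ × Bool → Situation → ℝ := fun j =>
    prodProcess (betMultiplier j.1 ((j.2.1 : ℝ) + 2)⁻¹ (testGamble lo hi j.2.2))
  have hε : ∀ m : ℕ, ((m : ℝ) + 2)⁻¹ ∈ Set.Icc (0 : ℝ) 1 := fun m =>
    ⟨by positivity, inv_le_one_of_one_le₀ (by linarith [m.cast_nonneg (α := ℝ)])⟩
  obtain ⟨ω, hω⟩ := exists_path_bddAbove_of_isTestSupermartingale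
    (fun s => ⟨(hφ s).1, (hφ s).2.1.trans (hφ s).2.2⟩) F
    (fun j => isTestSupermartingale_prodProcess_betMultiplier (hε _)
      (abs_testGamble_le_one hφ _) (upperE_testGamble_nonpos hφ _))
    fun s => ⟨2 ^ s.length, Set.forall_mem_range.2 fun _ =>
      (prodProcess_mem_Icc (betMultiplier_mem_Icc (hε _) (abs_testGamble_le_one hφ _)) s).2⟩
  refine ⟨ω, fun S hS hdiv => ⟨zero_le_liminf_of_limsup_neg_nonpos ?_, ?_⟩⟩
  · have h := limsup_selected_average_nonpos (c := testGamble lo hi true)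
      (abs_testGamble_le_one hφ true) hdiv fun m => hω ⟨⟨S, hS⟩, m, true⟩
    simp only [testGamble] at h
    convert h using 5 with n
    rw [← neg_div, ← Finset.sum_neg_distrib]
    congr 1
    exact Finset.sum_congr rfl fun k _ => by ring
  · simpa only [testGamble] using limsup_selected_average_nonpos (c := testGamble lo hi false)
      (abs_testGamble_le_one hφ false) hdiv fun m => hω ⟨⟨S, hS⟩, m, false⟩
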